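/- arXiv:1704.07418 — 2 statements merged into one kernel-verified Lean document; each statement's English description precedes it below -/
import Mathlib

section
/- A holomorphic map h : 𝔹ⁿ → ℂⁿ with h(0) = 0 and Dh(0) = -id satisfies Re⟨h(z), z⟩ ≤ 0 for all z ∈ 𝔹ⁿ if and only if Re⟨-h(z), z⟩ > 0 for all z ∈ 𝔹ⁿ \ {0}. -/
/-!
On the complex line through `z`, the function `g w = ⟪z, h (w • z)⟫` is holomorphic with
`g 0 = 0`, `g' 0 = -‖z‖²` and `Re (conj w * g w) = Re ⟪w • z, h (w • z)⟫ ≤ 0`. Hence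
`d = g w / w` is holomorphic with `Re d ≤ 0` and `Re d 0 < 0`; if `Re d` vanished somewhere,
`‖exp d‖ = exp (Re d)` would attain its maximum inside the disc, so `Re d < 0` everywhere,
and `w = 1` gives `Re ⟪h z, z⟫ < 0`.
-/

open Metric ComplexConjugate

theorem re_neg_of_re_nonpos_of_re_neg {E : Type*} [NormedAddCommGroup E] [NormedSpace ℂ E]
    {f : E → ℂ} {U : Set E} (hU : IsPreconnected U) (hUo : IsOpen U)
    (hf : DifferentiableOn ℂ f U) (hle : ∀ w ∈ U, (f w).re ≤ 0)
    {c : E} (hcU : c ∈ U) (hc : (f c).re < 0) {w : E} (hw : w ∈ U) : (f w).re < 0 := by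
  refine (hle w hw).lt_of_ne fun hw0 => hc.ne ?_
  have hmax : IsMaxOn (norm ∘ fun x => Complex.exp (f x)) U w := fun x hx => by
    simpa [Complex.norm_exp, hw0] using hle x hx
  have hexp := Complex.eqOn_of_isPreconnected_of_isMaxOn_norm hU hUo
    (fun x hx => (hf x hx).cexp) hw hmax hcU
  simpa [Complex.norm_exp, hw0] using congrArg norm hexp

theorem re_conj_mul_neg_of_re_conj_mul_nonpos {g : ℂ → ℂ} {U : Set ℂ} (hU : IsPreconnected U)
    (hUo : IsOpen U) (h0U : (0 : ℂ) ∈ U) (hg : DifferentiableOn ℂ g U) (hg0 : g 0 = 0)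
    (hg' : (deriv g 0).re < 0) (hle : ∀ w ∈ U, (conj w * g w).re ≤ 0)
    {w : ℂ} (hwU : w ∈ U) (hw : w ≠ 0) : (conj w * g w).re < 0 := by
  set d := dslope g 0
  have hd0 : d 0 = deriv g 0 := dslope_same g 0
  have hd : DifferentiableOn ℂ d U :=
    (Complex.differentiableOn_dslope (hUo.mem_nhds h0U)).mpr hg
  have hconj_mul : ∀ w, (conj w * g w).re = Complex.normSq w * (d w).re := fun w => by
    have hgw : g w = w * d w := by simpa [hg0] using (sub_smul_dslope g 0 w).symm
    rw [hgw, ← mul_assoc, ← Complex.normSq_eq_conj_mul_self, Complex.re_ofReal_mul]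
  have hd_nonpos : ∀ v ∈ U, (d v).re ≤ 0 := fun v hv => by
    rcases eq_or_ne v 0 with rfl | hv0
    · exact hd0 ▸ hg'.le
    · have := hconj_mul v ▸ hle v hv
      exact nonpos_of_mul_nonpos_right this (Complex.normSq_pos.mpr hv0)
  rw [hconj_mul]
  exact mul_neg_of_pos_of_neg (Complex.normSq_pos.mpr hw)
    (re_neg_of_re_nonpos_of_re_neg hU hUo hd hd_nonpos h0U (hd0 ▸ hg') hwU)

theorem re_inner_apply_self_neg {E : Type*} [NormedAddCommGroup E] [InnerProductSpace ℂ E]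
    {h : E → E} {r : ℝ} (hdiff : DifferentiableOn ℂ h (ball 0 r)) (h0 : h 0 = 0)
    (hD : ∀ v ≠ 0, (inner ℂ (fderiv ℂ h 0 v) v).re < 0)
    (hle : ∀ z ∈ ball 0 r, (inner ℂ (h z) z).re ≤ 0)
    {z : E} (hz : z ∈ ball 0 r) (hz0 : z ≠ 0) : (inner ℂ (h z) z).re < 0 := by
  have hzpos : 0 < ‖z‖ := norm_pos_iff.mpr hz0
  have hrpos : 0 < r := hzpos.trans (mem_ball_zero_iff.mp hz)
  set U : Set ℂ := ball 0 (r / ‖z‖)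
  have hmaps : Set.MapsTo (fun w : ℂ => w • z) U (ball 0 r) := fun w hw => by
    rw [mem_ball_zero_iff, norm_smul]
    exact (lt_div_iff₀ hzpos).mp (mem_ball_zero_iff.mp hw)
  set g : ℂ → ℂ := fun w => inner ℂ z (h (w • z))
  have hg : DifferentiableOn ℂ g U :=
    (innerSL ℂ z).differentiable.comp_differentiableOn
      (hdiff.comp (differentiable_id.smul_const z).differentiableOn hmaps)
  have hg' : HasDerivAt g (inner ℂ z (fderiv ℂ h 0 z)) 0 := by
    have hh : HasFDerivAt h (fderiv ℂ h 0) ((0 : ℂ) • z) := by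
      rw [zero_smul]
      exact (hdiff.differentiableAt (ball_mem_nhds 0 hrpos)).hasFDerivAt
    have hline : HasDerivAt (fun w : ℂ => w • z) z 0 := by
      simpa using (hasDerivAt_id (0 : ℂ)).smul_const z
    exact (innerSL ℂ z).hasFDerivAt.comp_hasDerivAt 0 (hh.comp_hasDerivAt 0 hline)
  have hconj_mul : ∀ w, conj w * g w = conj (inner ℂ (h (w • z)) (w • z)) := fun w => by
    rw [inner_conj_symm, inner_smul_left]
  have hre_neg := re_conj_mul_neg_of_re_conj_mul_nonpos (convex_ball 0 _).isPreconnected isOpen_ball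
    (mem_ball_self (div_pos hrpos hzpos)) hg (by simp [g, h0])
    (by rw [hg'.deriv, ← inner_conj_symm, Complex.conj_re]; exact hD z hz0)
    (fun w hw => by rw [hconj_mul, Complex.conj_re]; exact hle _ (hmaps hw))
    (w := 1) (by simpa [U, one_lt_div hzpos] using mem_ball_zero_iff.mp hz) one_ne_zero
  rwa [hconj_mul, one_smul, Complex.conj_re] at hre_neg

theorem class_Un_characterization
    (n : ℕ)
    (h : EuclideanSpace ℂ (Fin n) → EuclideanSpace ℂ (Fin n))
    (hdiff : DifferentiableOn ℂ h (ball 0 1))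
    (h0 : h 0 = 0)
    (hD : fderiv ℂ h 0 = -(ContinuousLinearMap.id ℂ (EuclideanSpace ℂ (Fin n)))) :
    (∀ z ∈ ball (0 : EuclideanSpace ℂ (Fin n)) 1,
        (inner ℂ (h z) z : ℂ).re ≤ 0) ↔
    (∀ z ∈ ball (0 : EuclideanSpace ℂ (Fin n)) 1, z ≠ 0 →
        0 < (inner ℂ (-h z) z : ℂ).re) := by
  simp only [inner_neg_left, Complex.neg_re, neg_pos]
  refine ⟨fun hle z hz hz0 => re_inner_apply_self_neg hdiff h0 (fun v hv => ?_) hle hz hz0,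
    fun hlt z hz => ?_⟩
  · simpa [hD, inner_neg_left, ← Complex.ofReal_pow] using pow_pos (norm_pos_iff.mpr hv) 2
  · rcases eq_or_ne z 0 with rfl | hz0
    · simp
    · exact (hlt z hz hz0).le
end

section
/- Let L : Hol(𝔻,ℂ) → ℂ be a continuous linear functional (for locally uniform convergence). Then the maximum of Re L over the compact convex set U_1 is attained at some function of the form h(z) = -z ∫_{∂𝔻} (κ+z)/(κ-z) dμ(κ), and moreover is attained at an extreme point h_κ₀(z) = -z(κ₀+z)/(κ₀-z) for some κ₀ ∈ ∂𝔻. -/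
open scoped Classical

open Metric MeasureTheory Complex Filter

/-- The class `U₁`, realized as functions on `ℂ` that vanish outside the unit disk. -/
def U1 : Set (ℂ → ℂ) :=
  {h | DifferentiableOn ℂ h (ball 0 1) ∧ h 0 = 0 ∧ deriv h 0 = -1 ∧
    (∀ z ∈ ball (0:ℂ) 1, (h z * (starRingEnd ℂ) z).re ≤ 0) ∧
    ∀ z ∉ ball (0:ℂ) 1, h z = 0}

/-!
Writing `h z = -z * p z` identifies `U₁` with the Carathéodory class of holomorphic `p` with
`p 0 = 1` and `0 ≤ re p`. For `r < 1` the dilate `p (r * ·)` is holomorphic on the closed disk,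
and the Herglotz formula writes it as the average of the kernels `(κ + z) / (κ - z)` against the
positive density `re p (r * κ)` on the unit circle. Weighted Riemann sums of this integral are
convex combinations of the functions `h_κ z = -z * (κ + z) / (κ - z)` (`kernelFn κ`), and they
converge locally uniformly. Since `re ∘ L` is `ℝ`-linear and sequentially continuous on `U₁`,
it is bounded on the dilates of `h` by `M = max_κ re (L h_κ)`, and then on `h` itself by letting
`r → 1`. The maximum `M` is attained because `κ ↦ h_κ` is continuous for locally uniform
convergence.
-/

open Set Topology Real ComplexConjugate

noncomputable section

theorem ContinuousOn.tendstoLocallyUniformlyOn_uncurry {α β E : Type*} [TopologicalSpace α]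
    [TopologicalSpace β] [LocallyCompactSpace β] [UniformSpace E] {f : α → β → E} {s : Set α}
    {U : Set β} {q : α} (hf : ContinuousOn (Function.uncurry f) (s ×ˢ U)) (hU : IsOpen U)
    (hq : q ∈ s) : TendstoLocallyUniformlyOn f (f q) (𝓝[s] q) U := by
  rw [tendstoLocallyUniformlyOn_iff_forall_isCompact hU]
  intro K hKU hK u hu
  obtain ⟨v, hv, hvu⟩ := hK.mem_uniformity_of_prod (hf.mono (prod_mono subset_rfl hKU)) hq
    (symm_le_uniformity hu)
  exact Filter.mem_of_superset hv fun p hp x hx ↦ hvu p hp x hx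

theorem re_le_of_mem_convexHull {E : Type*} [AddCommGroup E] [Module ℂ E] (L : E →ₗ[ℂ] ℂ)
    {S : Set E} {M : ℝ} (hS : ∀ f ∈ S, (L f).re ≤ M) {f : E} (hf : f ∈ convexHull ℝ S) :
    (L f).re ≤ M :=
  convexHull_min hS (convex_halfSpace_le (reLm.comp (L.restrictScalars ℝ)).isLinear M) hf

open Finset in
theorem norm_integral_smul_sub_riemannSum_le {E : Type*} [NormedAddCommGroup E]
    [NormedSpace ℝ E] [CompleteSpace E] {φ : ℝ → ℝ} {G : ℝ → E} {C : NNReal} {t : ℕ → ℝ} {n : ℕ}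
    {δ : ℝ} (hφ : Continuous φ) (hφ0 : ∀ x, 0 ≤ φ x) (hG : LipschitzWith C G) (ht : Monotone t)
    (hδ : ∀ j < n, t (j + 1) - t j ≤ δ) :
    ‖(∫ x in t 0..t n, φ x • G x) - ∑ j ∈ range n, (∫ x in t j..t (j + 1), φ x) • G (t j)‖
      ≤ C * δ * ∫ x in t 0..t n, φ x := by
  have hφG : Continuous fun x ↦ φ x • G x := hφ.smul hG.continuous
  calc _ = ‖∑ j ∈ range n, ∫ x in t j..t (j + 1), φ x • (G x - G (t j))‖ := by
        rw [← intervalIntegral.sum_integral_adjacent_intervals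
          fun j _ ↦ hφG.intervalIntegrable _ _, ← sum_sub_distrib]
        congr 2 with j
        simp only [smul_sub]
        rw [← intervalIntegral.integral_smul_const]
        exact (intervalIntegral.integral_sub (hφG.intervalIntegrable _ _)
          ((hφ.smul continuous_const).intervalIntegrable _ _)).symm
    _ ≤ ∑ j ∈ range n, ∫ x in t j..t (j + 1), C * δ * φ x := by
        refine (norm_sum_le _ _).trans (sum_le_sum fun j hj ↦ ?_)
        refine intervalIntegral.norm_integral_le_of_norm_le (ht j.le_succ)
          (ae_of_all _ fun x hx ↦ ?_) ((continuous_const.mul hφ).intervalIntegrable _ _)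
        have hdist : dist x (t j) ≤ δ := by
          rw [Real.dist_eq, abs_of_pos (sub_pos.2 hx.1)]
          linarith [hx.2, hδ j (mem_range.1 hj)]
        calc ‖φ x • (G x - G (t j))‖ = φ x * dist (G x) (G (t j)) := by
              rw [norm_smul, Real.norm_of_nonneg (hφ0 x), dist_eq_norm]
          _ ≤ φ x * (C * δ) := by
              refine mul_le_mul_of_nonneg_left ((hG.dist_le_mul x (t j)).trans ?_) (hφ0 x)
              gcongr
          _ = C * δ * φ x := mul_comm _ _
    _ = C * δ * ∫ x in t 0..t n, φ x := by
        simp only [intervalIntegral.integral_const_mul, ← mul_sum]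
        rw [intervalIntegral.sum_integral_adjacent_intervals fun j _ ↦ hφ.intervalIntegrable _ _]

/-- **Herglotz–Riesz formula**. -/
theorem DiffContOnCl.circleAverage_herglotzRieszKernel_smul_re {f : ℂ → ℂ} {R : ℝ} {w : ℂ}
    (hf : DiffContOnCl ℂ f (ball 0 R)) (hw : w ∈ ball 0 R) :
    Real.circleAverage (fun ζ ↦ herglotzRieszKernel 0 w ζ • ((f ζ).re : ℂ)) 0 R
      = f w - (f 0).im * I := by
  have hR : 0 < R := pos_of_mem_ball hw
  have hsphere : ContinuousOn f (sphere 0 |R|) := by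
    rw [abs_of_pos hR]
    exact hf.continuousOn.mono (by rw [closure_ball 0 hR.ne']; exact sphere_subset_closedBall)
  have hf_int : CircleIntegrable f 0 R := hsphere.circleIntegrable'
  have hre_int : CircleIntegrable (fun ζ ↦ (f ζ).re) 0 R :=
    (continuous_re.comp_continuousOn hsphere).circleIntegrable'
  set G := fun w ↦ Real.circleAverage (fun ζ ↦ herglotzRieszKernel 0 w ζ • ((f ζ).re : ℂ)) 0 R
  have hG : AnalyticOnNhd ℂ G (ball 0 R) := analyticOnNhd_circleAverage_herglotzRieszKernel_smul
    (continuous_ofReal.comp_continuousOn (continuous_re.comp_continuousOn hsphere)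
      |>.circleIntegrable')
  -- By the Poisson formula `G - f` has real part `0`, so it is a constant, read off at `0`.
  have hG_re : ∀ w ∈ ball 0 R, (G w).re = (f w).re := by
    intro w hw
    have hK_int : CircleIntegrable ((re ∘ herglotzRieszKernel 0 w) • f) 0 R :=
      ((continuous_ofReal.comp_continuousOn (continuous_re.comp_continuousOn
        (continuousOn_herglotzRieszKernel_sphere hw))).mul hsphere).circleIntegrable'
    rw [re_circleAverage_herglotzRieszKernel_smul hre_int hw,
      ← hf.circleAverage_re_herglotzRieszKernel_smul hw, ← reCLM_apply,
      ← reCLM.circleAverage_comp_comm hK_int]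
    congr 1 with ζ
    simp
  obtain ⟨c, hc⟩ := (hG.sub (hf.differentiableOn.analyticOnNhd isOpen_ball))
    |>.eq_const_of_re_eq_const (c₀ := 0) (fun w hw ↦ by simp [hG_re w hw]) isOpen_ball
      (isConnected_ball hR)
  simp only [Pi.sub_apply] at hc
  have hG0 : G 0 = (f 0).re := by
    have hmean : Real.circleAverage f 0 R = f 0 := (abs_of_pos hR ▸ hf).circleAverage
    calc G 0 = Real.circleAverage ((ofRealCLM.comp reCLM) ∘ f) 0 R := by
          refine Real.circleAverage_congr_sphere fun ζ hζ ↦ ?_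
          have : ζ ≠ 0 := ne_of_mem_sphere hζ (abs_pos.2 hR.ne').ne'
          simp [herglotzRieszKernel_def, div_self this]
      _ = (f 0).re := by rw [ContinuousLinearMap.circleAverage_comp_comm _ hf_int, hmean]; rfl
  calc G w = f w + (G 0 - f 0) := by
        linear_combination hc w hw - hc 0 (mem_ball_self hR)
    _ = f w - (f 0).im * I := by
        rw [hG0]
        apply Complex.ext <;> simp [sub_eq_add_neg]

theorem lipschitzWith_herglotzRieszKernel_circleMap {z : ℂ} {ρ : ℝ} (hz : ‖z‖ ≤ ρ)
    (hρ : ρ < 1) :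
    LipschitzWith (2 / (1 - ρ) ^ 2).toNNReal
      fun θ ↦ herglotzRieszKernel 0 z (circleMap 0 1 θ) := by
  refine LipschitzWith.of_dist_le_mul fun x y ↦ ?_
  have hρ' : 0 < 1 - ρ := by linarith [norm_nonneg z]
  have hgap : ∀ θ, 1 - ρ ≤ ‖circleMap 0 1 θ - z‖ := fun θ ↦ by
    have := norm_sub_norm_le (circleMap 0 1 θ) z
    rw [norm_circleMap_zero, abs_one] at this
    linarith
  have hne : ∀ θ, circleMap 0 1 θ - z ≠ 0 := fun θ ↦ norm_pos_iff.1 (hρ'.trans_le (hgap θ))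
  have hcircle : dist (circleMap 0 1 x) (circleMap 0 1 y) ≤ dist x y := by
    simpa using (lipschitzWith_circleMap 0 1).dist_le_mul x y
  have hdiff :
      herglotzRieszKernel 0 z (circleMap 0 1 x) - herglotzRieszKernel 0 z (circleMap 0 1 y)
        = 2 * z * (circleMap 0 1 y - circleMap 0 1 x)
          / ((circleMap 0 1 x - z) * (circleMap 0 1 y - z)) := by
    simp only [herglotzRieszKernel_def, sub_zero]
    field_simp [hne x, hne y]
    ring
  rw [Real.coe_toNNReal _ (by positivity), dist_eq_norm, hdiff]
  calc ‖2 * z * (circleMap 0 1 y - circleMap 0 1 x)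
        / ((circleMap 0 1 x - z) * (circleMap 0 1 y - z))‖
      = 2 * ‖z‖ * dist (circleMap 0 1 x) (circleMap 0 1 y)
          / (‖circleMap 0 1 x - z‖ * ‖circleMap 0 1 y - z‖) := by
        rw [norm_div, norm_mul, norm_mul, norm_mul, Complex.norm_two, dist_comm, dist_eq_norm]
    _ ≤ 2 * 1 * dist x y / ((1 - ρ) * (1 - ρ)) := by
        gcongr
        all_goals first | exact hgap _ | linarith
    _ = 2 / (1 - ρ) ^ 2 * dist x y := by ring

theorem DiffContOnCl.continuous_comp_circleMap {p : ℂ → ℂ} (hp : DiffContOnCl ℂ p (ball 0 1)) :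
    Continuous fun θ ↦ p (circleMap 0 1 θ) :=
  hp.continuousOn.comp_continuous (continuous_circleMap 0 1) fun θ ↦ by
    rw [closure_ball 0 one_ne_zero]
    exact sphere_subset_closedBall (circleMap_mem_sphere 0 zero_le_one θ)

theorem DiffContOnCl.integral_re_circleMap {p : ℂ → ℂ} (hp : DiffContOnCl ℂ p (ball 0 1)) :
    ∫ θ in 0..2 * π, (p (circleMap 0 1 θ)).re = 2 * π * (p 0).re := by
  have hint : CircleIntegrable p 0 1 := hp.continuous_comp_circleMap.intervalIntegrable _ _
  have := congrArg re (abs_one (α := ℝ) ▸ hp).circleAverage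
  rw [← reCLM_apply, ← reCLM.circleAverage_comp_comm hint, Real.circleAverage_def] at this
  simp only [Function.comp_apply, reCLM_apply, smul_eq_mul] at this
  field_simp at this
  linarith

theorem re_mul_mul_conj (z w : ℂ) : (z * w * conj z).re = normSq z * w.re := by
  rw [mul_comm z, mul_assoc, mul_conj, mul_comm, re_ofReal_mul]

def IsCaratheodory (p : ℂ → ℂ) : Prop :=
  DifferentiableOn ℂ p (ball 0 1) ∧ p 0 = 1 ∧ ∀ z ∈ ball (0 : ℂ) 1, 0 ≤ (p z).re

def ofCaratheodory (p : ℂ → ℂ) : ℂ → ℂ := fun z ↦ if z ∈ ball (0 : ℂ) 1 then -z * p z else 0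

lemma ofCaratheodory_of_mem_ball {p : ℂ → ℂ} {z : ℂ} (hz : z ∈ ball (0 : ℂ) 1) :
    ofCaratheodory p z = -z * p z :=
  if_pos hz

theorem ofCaratheodory_mem_U1 {p : ℂ → ℂ} (hp : IsCaratheodory p) : ofCaratheodory p ∈ U1 := by
  obtain ⟨hp_diff, hp0, hp_re⟩ := hp
  have h0 : (0 : ℂ) ∈ ball (0 : ℂ) 1 := mem_ball_self one_pos
  have hdiff : DifferentiableOn ℂ (fun z ↦ -z * p z) (ball 0 1) :=
    differentiableOn_id.neg.mul hp_diff
  refine ⟨hdiff.congr fun _ ↦ ofCaratheodory_of_mem_ball, by simp [ofCaratheodory, h0], ?_, ?_,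
    fun z hz ↦ by simp [ofCaratheodory, hz]⟩
  · have hderiv : HasDerivAt (fun z ↦ -z * p z) (-1) 0 := by
      simpa [hp0] using (hasDerivAt_id' (0 : ℂ)).fun_neg.fun_mul
        ((hp_diff 0 h0).differentiableAt (ball_mem_nhds 0 one_pos)).hasDerivAt
    exact (hderiv.congr_of_eventuallyEq
      (eventuallyEq_of_mem (ball_mem_nhds 0 one_pos) fun _ ↦ ofCaratheodory_of_mem_ball)).deriv
  · intro z hz
    rw [ofCaratheodory_of_mem_ball hz, neg_mul, neg_mul, neg_re, re_mul_mul_conj, neg_nonpos]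
    exact mul_nonneg (normSq_nonneg z) (hp_re z hz)

theorem mem_U1_iff {h : ℂ → ℂ} : h ∈ U1 ↔ ∃ p, IsCaratheodory p ∧ ofCaratheodory p = h := by
  refine ⟨fun hh ↦ ?_, fun ⟨p, hp, hph⟩ ↦ hph ▸ ofCaratheodory_mem_U1 hp⟩
  obtain ⟨hh_diff, hh0, hh_deriv, hh_re, hh_out⟩ := hh
  have hdslope : ∀ z, h z = z * dslope h 0 z := fun z ↦ by
    simpa [hh0] using (sub_smul_dslope h 0 z).symm
  refine ⟨-dslope h 0, ⟨?_, by simp [hh_deriv], fun z hz ↦ ?_⟩, funext fun z ↦ ?_⟩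
  · exact ((differentiableOn_dslope (ball_mem_nhds 0 one_pos)).2 hh_diff).neg
  · rcases eq_or_ne z 0 with rfl | hz0
    · simp [hh_deriv]
    have := hh_re z hz
    rw [hdslope, re_mul_mul_conj] at this
    simpa using nonpos_of_mul_nonpos_right this (normSq_pos.2 hz0)
  · by_cases hz : z ∈ ball (0 : ℂ) 1
    · simp [ofCaratheodory_of_mem_ball hz, hdslope z]
    · simp [ofCaratheodory, hz, hh_out z hz]

theorem convex_U1 : Convex ℝ U1 := by
  intro f ⟨hf_diff, hf0, hf_deriv, hf_re, hf_out⟩ g ⟨hg_diff, hg0, hg_deriv, hg_re, hg_out⟩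
    a b ha hb hab
  have hf_at := (hf_diff 0 (mem_ball_self one_pos)).differentiableAt (ball_mem_nhds 0 one_pos)
  have hg_at := (hg_diff 0 (mem_ball_self one_pos)).differentiableAt (ball_mem_nhds 0 one_pos)
  refine ⟨(hf_diff.const_smul a).add (hg_diff.const_smul b), by simp [hf0, hg0], ?_, ?_,
    fun z hz ↦ by simp [hf_out z hz, hg_out z hz]⟩
  · rw [deriv_add (hf_at.const_smul a) (hg_at.const_smul b), deriv_const_smul _ hf_at,
      deriv_const_smul _ hg_at, hf_deriv, hg_deriv, ← add_smul, hab, one_smul]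
  · intro z hz
    have : ((a • f + b • g) z * conj z).re = a * (f z * conj z).re + b * (g z * conj z).re := by
      simp [add_mul, Complex.real_smul, mul_assoc]
    rw [this]
    nlinarith [hf_re z hz, hg_re z hz]

theorem IsCaratheodory.comp_mul {p : ℂ → ℂ} (hp : IsCaratheodory p) {r : ℂ} (hr : ‖r‖ ≤ 1) :
    IsCaratheodory fun z ↦ p (r * z) := by
  have hmaps : MapsTo (r * ·) (ball (0 : ℂ) 1) (ball 0 1) := fun z hz ↦ by
    simp only [mem_ball_zero_iff, norm_mul] at hz ⊢
    nlinarith [norm_nonneg r, norm_nonneg z]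
  exact ⟨hp.1.comp (differentiableOn_id.const_mul r) hmaps, by simp [hp.2.1],
    fun z hz ↦ hp.2.2 _ (hmaps hz)⟩

theorem IsCaratheodory.diffContOnCl_comp_mul {p : ℂ → ℂ} (hp : IsCaratheodory p) {r : ℂ}
    (hr : ‖r‖ < 1) : DiffContOnCl ℂ (fun z ↦ p (r * z)) (ball 0 1) := by
  refine DifferentiableOn.diffContOnCl (hp.1.comp (differentiableOn_id.const_mul r) fun z hz ↦ ?_)
  rw [closure_ball 0 one_ne_zero, mem_closedBall_zero_iff] at hz
  simp only [mem_ball_zero_iff, norm_mul]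
  nlinarith [norm_nonneg r, norm_nonneg z]

theorem isCaratheodory_herglotzRieszKernel {κ : ℂ} (hκ : κ ∈ sphere (0 : ℂ) 1) :
    IsCaratheodory fun z ↦ herglotzRieszKernel 0 z κ := by
  have hκ0 : κ ≠ 0 := ne_of_mem_sphere hκ one_ne_zero
  have hne : ∀ z ∈ ball (0 : ℂ) 1, κ - z ≠ 0 := fun z hz h ↦ by
    rw [sub_eq_zero] at h
    simp_all
  refine ⟨?_, by simp [herglotzRieszKernel_def, hκ0], fun z hz ↦ ?_⟩
  · simp only [herglotzRieszKernel_def, sub_zero]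
    exact (differentiableOn_const κ |>.add differentiableOn_id).div
      (differentiableOn_const κ |>.sub differentiableOn_id) hne
  · refine le_trans ?_ (le_re_herglotzRieszKernel hκ hz)
    have := mem_ball_zero_iff.1 hz
    simp only [sub_zero]
    exact div_nonneg (by linarith) (by positivity)

def kernelFn (κ : ℂ) : ℂ → ℂ := ofCaratheodory fun z ↦ herglotzRieszKernel 0 z κ

lemma kernelFn_eq (κ : ℂ) :
    kernelFn κ = fun z ↦ if z ∈ ball (0 : ℂ) 1 then -z * (κ + z) / (κ - z) else 0 := by
  funext z
  simp only [kernelFn, ofCaratheodory, herglotzRieszKernel_def, sub_zero]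
  split_ifs <;> ring

lemma kernelFn_mem_U1 {κ : ℂ} (hκ : κ ∈ sphere (0 : ℂ) 1) : kernelFn κ ∈ U1 :=
  ofCaratheodory_mem_U1 (isCaratheodory_herglotzRieszKernel hκ)

lemma convexHull_kernelFn_subset_U1 : convexHull ℝ (kernelFn '' sphere 0 1) ⊆ U1 :=
  convexHull_min (image_subset_iff.2 fun _ ↦ kernelFn_mem_U1) convex_U1

lemma continuousOn_kernelFn_uncurry :
    ContinuousOn (Function.uncurry kernelFn) (sphere 0 1 ×ˢ ball 0 1) := by
  have hne : ∀ q ∈ sphere (0 : ℂ) 1 ×ˢ ball (0 : ℂ) 1, q.1 - q.2 ≠ 0 := fun q ⟨hκ, hz⟩ h ↦ by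
    rw [sub_eq_zero] at h
    simp_all
  refine ContinuousOn.congr (f := fun q : ℂ × ℂ ↦ -q.2 * (q.1 + q.2) / (q.1 - q.2))
    (by fun_prop (disch := exact hne)) fun ⟨_, z⟩ ⟨_, hz⟩ ↦ ?_
  simp only [Function.uncurry_apply_pair, kernelFn_eq, if_pos hz]

def circleMesh (n j : ℕ) : ℝ := 2 * π * j / (n + 1)

lemma monotone_circleMesh (n : ℕ) : Monotone (circleMesh n) := fun i j hij ↦ by
  unfold circleMesh
  gcongr

lemma circleMesh_zero (n : ℕ) : circleMesh n 0 = 0 := by simp [circleMesh]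

lemma circleMesh_self_add_one (n : ℕ) : circleMesh n (n + 1) = 2 * π := by
  simp only [circleMesh]
  push_cast
  field_simp

lemma circleMesh_succ_sub (n j : ℕ) :
    circleMesh n (j + 1) - circleMesh n j = 2 * π / (n + 1) := by
  simp only [circleMesh]
  push_cast
  ring

/-- The Riemann sum of the Herglotz integral of `p` over `n + 1` equal arcs, each arc carrying
its Herglotz mass. -/
def riemannKernelSum (p : ℂ → ℂ) (n : ℕ) : ℂ → ℂ :=
  ∑ j ∈ Finset.range (n + 1),
    ((2 * π)⁻¹ * ∫ θ in circleMesh n j..circleMesh n (j + 1), (p (circleMap 0 1 θ)).re) •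
      kernelFn (circleMap 0 1 (circleMesh n j))

section RiemannKernelSum

variable {p : ℂ → ℂ}

open Finset in
lemma riemannKernelSum_mem_convexHull (hp : DiffContOnCl ℂ p (ball 0 1)) (hp0 : p 0 = 1)
    (hp_re : ∀ z ∈ sphere (0 : ℂ) 1, 0 ≤ (p z).re) (n : ℕ) :
    riemannKernelSum p n ∈ convexHull ℝ (kernelFn '' sphere 0 1) := by
  have hφ : Continuous fun θ ↦ (p (circleMap 0 1 θ)).re :=
    continuous_re.comp hp.continuous_comp_circleMap
  refine (convex_convexHull ℝ _).sum_mem (fun j _ ↦ ?_) ?_ fun j _ ↦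
    subset_convexHull ℝ _ (mem_image_of_mem _ (circleMap_mem_sphere 0 zero_le_one _))
  · exact mul_nonneg (by positivity) (intervalIntegral.integral_nonneg
      (monotone_circleMesh n j.le_succ) fun θ _ ↦ hp_re _ (circleMap_mem_sphere 0 zero_le_one θ))
  · rw [← mul_sum, intervalIntegral.sum_integral_adjacent_intervals fun j _ ↦
      hφ.intervalIntegrable _ _, circleMesh_zero, circleMesh_self_add_one,
      hp.integral_re_circleMap, hp0, one_re, mul_one, inv_mul_cancel₀ (by positivity)]

open Finset in
lemma norm_ofCaratheodory_sub_riemannKernelSum_le (hp : DiffContOnCl ℂ p (ball 0 1))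
    (hp0 : p 0 = 1) (hp_re : ∀ z ∈ sphere (0 : ℂ) 1, 0 ≤ (p z).re) {ρ : ℝ} (hρ : ρ < 1) {z : ℂ}
    (hz : ‖z‖ ≤ ρ) (n : ℕ) :
    ‖ofCaratheodory p z - riemannKernelSum p n z‖ ≤ 2 / (1 - ρ) ^ 2 * (2 * π / (n + 1)) := by
  have hzb : z ∈ ball (0 : ℂ) 1 := mem_ball_zero_iff.2 (hz.trans_lt hρ)
  set φ := fun θ ↦ (p (circleMap 0 1 θ)).re
  set G := fun θ ↦ herglotzRieszKernel 0 z (circleMap 0 1 θ)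
  have hherglotz : p z = (2 * π)⁻¹ • ∫ θ in 0..2 * π, φ θ • G θ := by
    have := hp.circleAverage_herglotzRieszKernel_smul_re hzb
    simp only [hp0, one_im, ofReal_zero, zero_mul, sub_zero] at this
    rw [← this, Real.circleAverage_def]
    congr 2 with θ
    simp [φ, G, Complex.real_smul, mul_comm]
  have hsum : riemannKernelSum p n z = -z * ((2 * π)⁻¹ • ∑ j ∈ range (n + 1),
      (∫ θ in circleMesh n j..circleMesh n (j + 1), φ θ) • G (circleMesh n j)) := by
    simp only [riemannKernelSum, Finset.sum_apply, Pi.smul_apply, kernelFn,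
      ofCaratheodory_of_mem_ball hzb, smul_sum, mul_sum]
    congr 1 with j
    simp only [Complex.real_smul, G]
    push_cast
    ring
  have hφ_int : ∫ θ in 0..2 * π, φ θ = 2 * π := by simpa [hp0] using hp.integral_re_circleMap
  have hriemann := norm_integral_smul_sub_riemannSum_le (φ := φ) (G := G)
    (continuous_re.comp hp.continuous_comp_circleMap)
    (fun θ ↦ hp_re _ (circleMap_mem_sphere 0 zero_le_one θ))
    (lipschitzWith_herglotzRieszKernel_circleMap hz hρ) (monotone_circleMesh n)
    (n := n + 1) fun j _ ↦ (circleMesh_succ_sub n j).le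
  rw [circleMesh_zero, circleMesh_self_add_one, hφ_int, Real.coe_toNNReal _ (by positivity)]
    at hriemann
  rw [ofCaratheodory_of_mem_ball hzb, hherglotz, hsum, ← mul_sub, ← smul_sub, norm_mul, norm_neg,
    norm_smul]
  calc ‖z‖ * (‖(2 * π)⁻¹‖ * _)
      ≤ 1 * ((2 * π)⁻¹ * (2 / (1 - ρ) ^ 2 * (2 * π / (n + 1)) * (2 * π))) := by
        gcongr
        · linarith [mem_ball_zero_iff.1 hzb]
        · rw [Real.norm_of_nonneg (by positivity)]
    _ = 2 / (1 - ρ) ^ 2 * (2 * π / (n + 1)) := by field_simp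

lemma tendstoLocallyUniformlyOn_riemannKernelSum (hp : DiffContOnCl ℂ p (ball 0 1))
    (hp0 : p 0 = 1) (hp_re : ∀ z ∈ sphere (0 : ℂ) 1, 0 ≤ (p z).re) :
    TendstoLocallyUniformlyOn (riemannKernelSum p) (ofCaratheodory p) atTop (ball 0 1) := by
  rw [tendstoLocallyUniformlyOn_iff_forall_isCompact isOpen_ball]
  intro K hK hKc
  obtain ⟨ρ, hρ, hKρ⟩ := exists_lt_subset_ball hKc.isClosed hK
  have hbound : Tendsto (fun n : ℕ ↦ 2 / (1 - ρ) ^ 2 * (2 * π / (n + 1))) atTop (𝓝 0) := by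
    simpa [div_eq_mul_one_div (2 * π)] using
      (tendsto_one_div_add_atTop_nhds_zero_nat.const_mul (2 * π)).const_mul (2 / (1 - ρ) ^ 2)
  rw [Metric.tendstoUniformlyOn_iff]
  intro ε hε
  filter_upwards [hbound.eventually (gt_mem_nhds hε)] with n hn z hz
  rw [dist_eq_norm]
  exact (norm_ofCaratheodory_sub_riemannKernelSum_le hp hp0 hp_re hρ
    (mem_ball_zero_iff.1 (hKρ hz)).le n).trans_lt hn

end RiemannKernelSum

def SeqContinuousOnU1 (L : (ℂ → ℂ) →ₗ[ℂ] ℂ) : Prop :=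
  ∀ (f : ℕ → ℂ → ℂ) (g : ℂ → ℂ), (∀ n, f n ∈ U1) → g ∈ U1 →
    (∀ K : Set ℂ, K ⊆ ball 0 1 → IsCompact K → TendstoUniformlyOn (fun n ↦ f n) g atTop K) →
    Tendsto (fun n ↦ L (f n)) atTop (𝓝 (L g))

namespace SeqContinuousOnU1

variable {L : (ℂ → ℂ) →ₗ[ℂ] ℂ}

theorem tendsto (hL : SeqContinuousOnU1 L) {ι : Type*} {l : Filter ι} [l.IsCountablyGenerated]
    {F : ι → ℂ → ℂ} {g : ℂ → ℂ} (hF : ∀ᶠ i in l, F i ∈ U1) (hg : g ∈ U1)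
    (hFg : TendstoLocallyUniformlyOn F g l (ball 0 1)) :
    Tendsto (fun i ↦ L (F i)) l (𝓝 (L g)) := by
  refine tendsto_iff_seq_tendsto.2 fun x hx ↦ ?_
  obtain ⟨N, hN⟩ := eventually_atTop.1 (hx.eventually hF)
  rw [← tendsto_add_atTop_iff_nat N]
  refine hL _ g (fun n ↦ hN _ (Nat.le_add_left N n)) hg fun K hK hKc u hu ↦ ?_
  exact ((hx.comp (tendsto_add_atTop_nat N)).eventually
    ((tendstoLocallyUniformlyOn_iff_forall_isCompact isOpen_ball).1 hFg K hK hKc u hu))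

theorem continuousOn_re_kernelFn (hL : SeqContinuousOnU1 L) :
    ContinuousOn (fun κ ↦ (L (kernelFn κ)).re) (sphere 0 1) := fun _ hκ ↦
  continuous_re.continuousAt.comp_continuousWithinAt <| hL.tendsto
    (eventually_mem_nhdsWithin.mono fun _ ↦ kernelFn_mem_U1) (kernelFn_mem_U1 hκ)
    (continuousOn_kernelFn_uncurry.tendstoLocallyUniformlyOn_uncurry isOpen_ball hκ)

theorem re_ofCaratheodory_le (hL : SeqContinuousOnU1 L) {M : ℝ}
    (hM : ∀ κ ∈ sphere (0 : ℂ) 1, (L (kernelFn κ)).re ≤ M) {p : ℂ → ℂ}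
    (hp : DiffContOnCl ℂ p (ball 0 1)) (hp0 : p 0 = 1)
    (hp_re : ∀ z ∈ closedBall (0 : ℂ) 1, 0 ≤ (p z).re) :
    (L (ofCaratheodory p)).re ≤ M := by
  have hp_re' : ∀ z ∈ sphere (0 : ℂ) 1, 0 ≤ (p z).re := fun z hz ↦
    hp_re z (sphere_subset_closedBall hz)
  have hhull : ∀ n, riemannKernelSum p n ∈ convexHull ℝ (kernelFn '' sphere 0 1) :=
    riemannKernelSum_mem_convexHull hp hp0 hp_re'
  have hp_mem : ofCaratheodory p ∈ U1 := ofCaratheodory_mem_U1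
    ⟨hp.differentiableOn, hp0, fun z hz ↦ hp_re z (ball_subset_closedBall hz)⟩
  have hlim := hL.tendsto (Eventually.of_forall fun n ↦ convexHull_kernelFn_subset_U1 (hhull n))
    hp_mem    (tendstoLocallyUniformlyOn_riemannKernelSum hp hp0 hp_re')
  refine le_of_tendsto' ((continuous_re.tendsto _).comp hlim) fun n ↦
    re_le_of_mem_convexHull L ?_ (hhull n)
  rintro _ ⟨κ, hκ, rfl⟩
  exact hM κ hκ

theorem re_le_of_forall_kernelFn_le (hL : SeqContinuousOnU1 L) {M : ℝ}
    (hM : ∀ κ ∈ sphere (0 : ℂ) 1, (L (kernelFn κ)).re ≤ M) {h : ℂ → ℂ} (hh : h ∈ U1) :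
    (L h).re ≤ M := by
  obtain ⟨p, hp, rfl⟩ := mem_U1_iff.1 hh
  have hdilate : ∀ r ∈ Ioo (0 : ℝ) 1, (L (ofCaratheodory fun z ↦ p (r * z))).re ≤ M := by
    intro r hr
    have hr' : ‖(r : ℂ)‖ < 1 := by simpa [abs_of_pos hr.1] using hr.2
    refine hL.re_ofCaratheodory_le hM (hp.diffContOnCl_comp_mul hr') (by simp [hp.2.1])
      fun z hz ↦ hp.2.2 _ ?_
    rw [mem_closedBall_zero_iff] at hz
    rw [mem_ball_zero_iff, norm_mul]
    nlinarith [norm_nonneg (r : ℂ)]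
  have hcont : ContinuousOn (Function.uncurry fun r : ℝ ↦ ofCaratheodory fun z ↦ p (r * z))
      (Icc 0 1 ×ˢ ball 0 1) := by
    refine ContinuousOn.congr (f := fun q : ℝ × ℂ ↦ -q.2 * p (q.1 * q.2)) ?_
      fun ⟨_, _⟩ ⟨_, hz⟩ ↦ ofCaratheodory_of_mem_ball (p := fun z ↦ p (_ * z)) hz
    refine continuous_snd.neg.continuousOn.mul (hp.1.continuousOn.comp (by fun_prop) ?_)
    rintro ⟨r, z⟩ ⟨hr, hz⟩
    simp only [mem_ball_zero_iff, norm_mul, norm_real, Real.norm_of_nonneg hr.1] at hz ⊢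
    nlinarith [hr.2, norm_nonneg z]
  have hT := hcont.tendstoLocallyUniformlyOn_uncurry isOpen_ball (right_mem_Icc.2 zero_le_one)
  simp only [ofReal_one, one_mul] at hT
  have hle : 𝓝[<] (1 : ℝ) ≤ 𝓝[Icc 0 1] 1 :=
    (nhdsWithin_Ioo_eq_nhdsLT zero_lt_one).symm.trans_le (nhdsWithin_mono _ Ioo_subset_Icc_self)
  have hlim := (hL.tendsto (eventually_mem_nhdsWithin.mono fun r hr ↦ ofCaratheodory_mem_U1
    (hp.comp_mul (by simpa [abs_of_nonneg hr.1] using hr.2))) hh hT).mono_left hle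
  exact le_of_tendsto ((continuous_re.tendsto _).comp hlim)
    (eventually_of_mem (Ioo_mem_nhdsLT zero_lt_one) hdilate)

end SeqContinuousOnU1

end

theorem max_of_linear_functional_on_U1
    (L : (ℂ → ℂ) →ₗ[ℂ] ℂ)
    (hL : ∀ (f : ℕ → ℂ → ℂ) (g : ℂ → ℂ),
      (∀ n, f n ∈ U1) → g ∈ U1 →
      (∀ K : Set ℂ, K ⊆ ball 0 1 → IsCompact K →
        TendstoUniformlyOn (fun n => f n) g atTop K) →
      Tendsto (fun n => L (f n)) atTop (nhds (L g))) :
    (∃ (h : ℂ → ℂ) (μ : Measure (Metric.sphere (0:ℂ) 1)),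
        IsProbabilityMeasure μ ∧ h ∈ U1 ∧
        (∀ z ∈ ball (0:ℂ) 1,
          h z = -z * ∫ κ : Metric.sphere (0:ℂ) 1, ((κ:ℂ) + z) / ((κ:ℂ) - z) ∂μ) ∧
        ∀ h' ∈ U1, (L h').re ≤ (L h).re) ∧
    ∃ κ₀ : ℂ, ‖κ₀‖ = 1 ∧
      (fun z => if z ∈ ball (0:ℂ) 1 then -z * (κ₀ + z) / (κ₀ - z) else 0) ∈ U1 ∧
      ∀ h' ∈ U1, (L h').re ≤
        (L (fun z => if z ∈ ball (0:ℂ) 1 then -z * (κ₀ + z) / (κ₀ - z) else 0)).re := by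
  have hL' : SeqContinuousOnU1 L := hL
  obtain ⟨κ₀, hκ₀, hmax⟩ := (isCompact_sphere (0 : ℂ) 1).exists_isMaxOn
    (NormedSpace.sphere_nonempty.2 zero_le_one) hL'.continuousOn_re_kernelFn
  have hmem := kernelFn_mem_U1 hκ₀
  have hle : ∀ h' ∈ U1, (L h').re ≤ (L (kernelFn κ₀)).re := fun _ ↦
    hL'.re_le_of_forall_kernelFn_le fun _ hκ ↦ hmax hκ
  rw [kernelFn_eq] at hmem hle
  refine ⟨⟨_, Measure.dirac ⟨κ₀, hκ₀⟩, inferInstance, hmem, fun z hz ↦ ?_, hle⟩,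
    κ₀, mem_sphere_zero_iff_norm.1 hκ₀, hmem, hle⟩
  simp only [integral_dirac, if_pos hz]
  ring
end
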